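/- Let ϑ > 1, n ≥ 1, and let (λ_k), (μ_k) be sequences with ϑ^{-1}k^{2/n} ≤ λ_k, μ_k ≤ ϑ k^{2/n}. Fix integers j ≥ 2 and m ≥ 0 and set d_k = ∫₀^λ s^{j-1}/(λ_k+s)^{j+m+1} ds and e_k = ∫₀^λ s^{j-1}/(μ_k+s)^{j+m+1} ds for λ > 0. Then |d_k − e_k| ≤ j(j+m+1)2^{j-1}·ϑ^{m+2}·k^{-2(m+2)/n}·|λ_k − μ_k| for all k ≥ 1. -/

import Mathlib

/-!
Writing `y = a + s ≤ x = b + s`, the tangent-line bound `y⁻ᴺ - x⁻ᴺ ≤ N (x - y) / yᴺ⁺¹` together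
with `s ≤ y` bounds the difference of the integrands by `N |a - b| / (min a b + s)^(m+3)`.
Integrating in `s` gives `N |a - b| / ((m + 2) (min a b)^(m+2))` with `N = j + m + 1`, and the
Weyl-type lower bound `min (λ_k, μ_k) ≥ ϑ⁻¹ k^(2/n)` turns this into the claim.
-/

open intervalIntegral MeasureTheory Set

lemma inv_pow_sub_inv_pow_le {x y : ℝ} (hy : 0 < y) (hyx : y ≤ x) (N : ℕ) :
    (y ^ N)⁻¹ - (x ^ N)⁻¹ ≤ N * (x - y) / y ^ (N + 1) := by
  obtain _ | N := N
  · simp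
  have hx : 0 < x := hy.trans_le hyx
  have hpow : x ^ (N + 1) - y ^ (N + 1) ≤ (x - y) * (N + 1 : ℕ) * x ^ N := by
    have h := (le_abs_self _).trans (abs_pow_sub_pow_le x y (N + 1))
    rwa [abs_of_nonneg (sub_nonneg.2 hyx), abs_of_pos hx, abs_of_pos hy, max_eq_left hyx,
      Nat.add_sub_cancel] at h
  calc (y ^ (N + 1))⁻¹ - (x ^ (N + 1))⁻¹
      = (x ^ (N + 1) - y ^ (N + 1)) / (x * x ^ N * y ^ (N + 1)) := by
        field_simp; ring
    _ ≤ (x - y) * (N + 1 : ℕ) * x ^ N / (x * x ^ N * y ^ (N + 1)) := by gcongr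
    _ = (N + 1 : ℕ) * (x - y) / (x * y ^ (N + 1)) := by field_simp
    _ ≤ (N + 1 : ℕ) * (x - y) / (y * y ^ (N + 1)) := by gcongr
    _ = (N + 1 : ℕ) * (x - y) / y ^ (N + 1 + 1) := by ring

lemma abs_pow_div_add_pow_sub_le {a b t : ℝ} (ha : 0 < a) (hab : a ≤ b) (ht : 0 ≤ t) (p q : ℕ) :
    |t ^ p / (a + t) ^ (p + q + 1) - t ^ p / (b + t) ^ (p + q + 1)| ≤
      (p + q + 1 : ℕ) * (b - a) / (a + t) ^ (q + 2) := by
  have hat : 0 < a + t := by positivity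
  have hle : a + t ≤ b + t := by linarith
  have hinv := inv_pow_sub_inv_pow_le hat hle (p + q + 1)
  rw [abs_of_nonneg (sub_nonneg.2 (by gcongr))]
  calc t ^ p / (a + t) ^ (p + q + 1) - t ^ p / (b + t) ^ (p + q + 1)
      = t ^ p * (((a + t) ^ (p + q + 1))⁻¹ - ((b + t) ^ (p + q + 1))⁻¹) := by ring
    _ ≤ (a + t) ^ p * ((p + q + 1 : ℕ) * (b - a) / (a + t) ^ (p + q + 1 + 1)) := by
        refine mul_le_mul (pow_le_pow_left₀ ht (by linarith) p) (by simpa using hinv)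
          (sub_nonneg.2 ?_) (by positivity)
        gcongr
    _ = (p + q + 1 : ℕ) * (b - a) / (a + t) ^ (q + 2) := by
        field_simp; ring

lemma integral_inv_add_pow {a lam : ℝ} (ha : 0 < a) (hlam : 0 ≤ lam) (q : ℕ) :
    ∫ s in (0:ℝ)..lam, ((a + s) ^ (q + 2))⁻¹ =
      ((a ^ (q + 1))⁻¹ - ((a + lam) ^ (q + 1))⁻¹) / (q + 1) := by
  have hzero : (0 : ℝ) ∉ uIcc (a + 0) (a + lam) := by
    rw [uIcc_of_le (by linarith)]; intro h; linarith [h.1]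
  simp_rw [← zpow_natCast, ← zpow_neg]
  rw [integral_comp_add_left (fun u : ℝ => u ^ (-((q + 2 : ℕ) : ℤ))) a,
    integral_zpow (Or.inr ⟨by omega, hzero⟩),
    show -((q + 2 : ℕ) : ℤ) + 1 = -((q + 1 : ℕ) : ℤ) by push_cast; ring]
  push_cast
  rw [add_zero, show -((q : ℝ) + 2) + 1 = -(q + 1) by ring, div_neg, ← neg_div, neg_sub]

lemma intervalIntegrable_div_add_pow {f : ℝ → ℝ} (hf : Continuous f) {c lam : ℝ} (hc : 0 < c)
    (hlam : 0 ≤ lam) (N : ℕ) :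
    IntervalIntegrable (fun s => f s / (c + s) ^ N) volume 0 lam := by
  refine (hf.continuousOn.div (by fun_prop) fun s hs => ?_).intervalIntegrable
  rw [uIcc_of_le hlam] at hs
  have : 0 < c + s := by linarith [hs.1]
  positivity

theorem abs_integral_pow_div_add_pow_sub_le {a b lam : ℝ} (ha : 0 < a) (hab : a ≤ b)
    (hlam : 0 ≤ lam) (p q : ℕ) :
    |(∫ s in (0:ℝ)..lam, s ^ p / (a + s) ^ (p + q + 1)) -
        ∫ s in (0:ℝ)..lam, s ^ p / (b + s) ^ (p + q + 1)| ≤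
      (p + q + 1 : ℕ) * (b - a) / ((q + 1) * a ^ (q + 1)) := by
  set C : ℝ := (p + q + 1 : ℕ) * (b - a)
  have hC : 0 ≤ C := mul_nonneg (by positivity) (sub_nonneg.2 hab)
  have hpoint : ∀ᵐ t, t ∈ Ioc 0 lam →
      ‖t ^ p / (a + t) ^ (p + q + 1) - t ^ p / (b + t) ^ (p + q + 1)‖ ≤ C / (a + t) ^ (q + 2) :=
    ae_of_all _ fun t ht => abs_pow_div_add_pow_sub_le ha hab ht.1.le p q
  rw [← integral_sub (intervalIntegrable_div_add_pow (by fun_prop) ha hlam _)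
    (intervalIntegrable_div_add_pow (by fun_prop) (ha.trans_le hab) hlam _)]
  calc _ ≤ ∫ s in (0:ℝ)..lam, C / (a + s) ^ (q + 2) :=
        norm_integral_le_of_norm_le hlam hpoint
          (intervalIntegrable_div_add_pow continuous_const ha hlam _)
    _ = C * (((a ^ (q + 1))⁻¹ - ((a + lam) ^ (q + 1))⁻¹) / (q + 1)) := by
        simp_rw [div_eq_mul_inv C]
        rw [intervalIntegral.integral_const_mul, integral_inv_add_pow ha hlam]
    _ ≤ C * ((a ^ (q + 1))⁻¹ / (q + 1)) := by
        gcongr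
        exact sub_le_self _ (by positivity)
    _ = C / ((q + 1) * a ^ (q + 1)) := by field_simp

theorem abs_integral_pow_div_add_pow_sub_le_of_le {a b c lam : ℝ} (hc : 0 < c) (hca : c ≤ a)
    (hcb : c ≤ b) (hlam : 0 ≤ lam) (p q : ℕ) :
    |(∫ s in (0:ℝ)..lam, s ^ p / (a + s) ^ (p + q + 1)) -
        ∫ s in (0:ℝ)..lam, s ^ p / (b + s) ^ (p + q + 1)| ≤
      (p + q + 1 : ℕ) * |a - b| / ((q + 1) * c ^ (q + 1)) := by
  wlog hab : a ≤ b generalizing a b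
  · rw [abs_sub_comm, abs_sub_comm a]
    exact this hcb hca (le_of_not_ge hab)
  calc _ ≤ (p + q + 1 : ℕ) * (b - a) / ((q + 1) * a ^ (q + 1)) :=
        abs_integral_pow_div_add_pow_sub_le (hc.trans_le hca) hab hlam p q
    _ ≤ (p + q + 1 : ℕ) * |a - b| / ((q + 1) * c ^ (q + 1)) := by
        rw [abs_sub_comm, abs_of_nonneg (sub_nonneg.2 hab)]
        gcongr

lemma rpow_neg_mul_div_eq_inv_pow {x : ℝ} (hx : 0 ≤ x) (n m : ℕ) :
    x ^ (-(2 * ((m : ℝ) + 2)) / n) = ((x ^ ((2 : ℝ) / n)) ^ (m + 2))⁻¹ := by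
  rw [← Real.rpow_natCast, ← Real.rpow_mul hx, ← Real.rpow_neg hx]
  congr 1
  push_cast
  ring

theorem stmt16_general (n : ℕ) (ϑ : ℝ) (hϑ : 1 < ϑ) (lamk muk : ℕ → ℝ)
    (hl : ∀ k : ℕ, ϑ⁻¹ * ((k : ℝ) + 1) ^ ((2 : ℝ) / n) ≤ lamk k ∧
        lamk k ≤ ϑ * ((k : ℝ) + 1) ^ ((2 : ℝ) / n))
    (hm : ∀ k : ℕ, ϑ⁻¹ * ((k : ℝ) + 1) ^ ((2 : ℝ) / n) ≤ muk k ∧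
        muk k ≤ ϑ * ((k : ℝ) + 1) ^ ((2 : ℝ) / n))
    (j m : ℕ) (hj : 2 ≤ j) (lam : ℝ) (hlam : 0 < lam) (k : ℕ) :
    |(∫ s in (0:ℝ)..lam, s ^ (j - 1) / (lamk k + s) ^ (j + m + 1)) -
        ∫ s in (0:ℝ)..lam, s ^ (j - 1) / (muk k + s) ^ (j + m + 1)| ≤
      (j : ℝ) * ((j : ℝ) + (m : ℝ) + 1) * 2 ^ (j - 1) * ϑ ^ (m + 2) *
        ((k : ℝ) + 1) ^ (-(2 * ((m : ℝ) + 2)) / n) * |lamk k - muk k| := by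
  obtain ⟨p, rfl⟩ : ∃ p, j = p + 1 := ⟨j - 1, by omega⟩
  set K := ((k : ℝ) + 1) ^ ((2 : ℝ) / n)
  have hK : 0 < K := by positivity
  have hϑ0 : 0 < ϑ := by linarith
  have hbound := abs_integral_pow_div_add_pow_sub_le_of_le (by positivity : 0 < ϑ⁻¹ * K)
    (hl k).1 (hm k).1 hlam.le p (m + 1)
  have hconst : (1 : ℝ) ≤ ((p : ℝ) + 1) * 2 ^ p :=
    one_le_mul_of_one_le_of_one_le (by simp) (one_le_pow₀ (by norm_num))
  rw [rpow_neg_mul_div_eq_inv_pow (by positivity), Nat.add_sub_cancel]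
  rw [show p + (m + 1) + 1 = p + 1 + m + 1 by ring] at hbound
  set D := |lamk k - muk k|
  calc _ ≤ _ := hbound
    _ ≤ ((p : ℝ) + 1 + m + 1) * D / (ϑ⁻¹ * K) ^ (m + 2) := by
        push_cast
        gcongr
        exact le_mul_of_one_le_left (by positivity) (by linarith [m.cast_nonneg (α := ℝ)])
    _ = ((p : ℝ) + 1 + m + 1) * ϑ ^ (m + 2) * (K ^ (m + 2))⁻¹ * D := by
        rw [mul_pow, inv_pow]
        field_simp
    _ ≤ ((p : ℝ) + 1) * 2 ^ p * (((p : ℝ) + 1 + m + 1) * ϑ ^ (m + 2) * (K ^ (m + 2))⁻¹ * D) :=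
        le_mul_of_one_le_left (by positivity) hconst
    _ = _ := by push_cast; ring

theorem stmt16 (n : ℕ) (hn : 1 ≤ n) (ϑ : ℝ) (hϑ : 1 < ϑ) (lamk muk : ℕ → ℝ)
    (hl : ∀ k : ℕ, ϑ⁻¹ * ((k : ℝ) + 1) ^ ((2 : ℝ) / n) ≤ lamk k ∧
        lamk k ≤ ϑ * ((k : ℝ) + 1) ^ ((2 : ℝ) / n))
    (hm : ∀ k : ℕ, ϑ⁻¹ * ((k : ℝ) + 1) ^ ((2 : ℝ) / n) ≤ muk k ∧
        muk k ≤ ϑ * ((k : ℝ) + 1) ^ ((2 : ℝ) / n))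
    (j m : ℕ) (hj : 2 ≤ j) (lam : ℝ) (hlam : 0 < lam) (k : ℕ) :
    |(∫ s in (0:ℝ)..lam, s ^ (j - 1) / (lamk k + s) ^ (j + m + 1)) -
        ∫ s in (0:ℝ)..lam, s ^ (j - 1) / (muk k + s) ^ (j + m + 1)| ≤
      (j : ℝ) * ((j : ℝ) + (m : ℝ) + 1) * 2 ^ (j - 1) * ϑ ^ (m + 2) *
        ((k : ℝ) + 1) ^ (-(2 * ((m : ℝ) + 2)) / n) * |lamk k - muk k| :=
  stmt16_general n ϑ hϑ lamk muk hl hm j m hj lam hlam k
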